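/- arXiv:2102.03035 — 3 statements merged into one kernel-verified Lean document; each statement's English description precedes it below -/
import Mathlib

section
/- Let X be a compact metric space with finite N-dimensional Hausdorff measure (N ≥ 1 real), let u : X → ℝ be Lipschitz, and let A ⊆ X be compact. Then for every δ > 0, the function t ↦ H^{N-1}_δ(u^{-1}(t) ∩ A) (the δ-premeasure of the level set intersected with A) is upper semicontinuous in t; consequently t ↦ H^{N-1}(u^{-1}(t) ∩ A) is a Borel measurable function of t. -/
open Set ENNReal
open scoped NNReal

/-- `v k = π^(k/2) / Γ(k/2 + 1)`, the normalizing constant for Hausdorff measure. -/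
noncomputable def vball (k : ℝ) : ℝ := Real.pi ^ (k / 2) / Real.Gamma (k / 2 + 1)

/-- The Hausdorff premeasure at scale `δ` in dimension `d`, with the paper's
normalization `v_d / 2^d`, using covers by countably many sets of diameter strictly
less than `δ`. -/
noncomputable def preHaus {X : Type*} [MetricSpace X] (d δ : ℝ) (S : Set X) : ℝ≥0∞ :=
  ENNReal.ofReal (vball d / 2 ^ d) *
    ⨅ (A : ℕ → Set X) (_ : S ⊆ ⋃ i, A i)
      (_ : ∀ i, EMetric.diam (A i) < ENNReal.ofReal δ),
      ∑' i, EMetric.diam (A i) ^ d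

/-- The `d`-dimensional Hausdorff measure `H^d(S) = lim_{δ → 0} H^d_δ(S)`
(the premeasures increase as `δ` decreases, so the limit is the supremum). -/
noncomputable def hausMeas {X : Type*} [MetricSpace X] (d : ℝ) (S : Set X) : ℝ≥0∞ :=
  ⨆ (δ : ℝ) (_ : 0 < δ), preHaus d δ S

lemma preHaus_anti {X : Type*} [MetricSpace X] (d : ℝ) {δ δ' : ℝ} (h : δ ≤ δ') (S : Set X) :
    preHaus d δ' S ≤ preHaus d δ S := by
  refine mul_le_mul_right ?_ _
  refine le_iInf fun B => le_iInf fun h1 => le_iInf fun h2 => ?_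
  exact iInf_le_of_le B (iInf_le_of_le h1 (iInf_le_of_le
    (fun i => lt_of_lt_of_le (h2 i) (ENNReal.ofReal_le_ofReal h)) le_rfl))

lemma preHaus_zero_dim {X : Type*} [MetricSpace X] (δ : ℝ) (S : Set X) :
    preHaus 0 δ S = ENNReal.ofReal (vball 0 / 2 ^ (0:ℝ)) * ⊤ := by
  unfold preHaus
  congr 1
  refine le_antisymm le_top ?_
  refine le_iInf fun B => le_iInf fun _ => le_iInf fun _ => ?_
  have : ∀ i : ℕ, EMetric.diam (B i) ^ (0:ℝ) = 1 := fun i => by rw [ENNReal.rpow_zero]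
  simp only [this]
  exact le_of_eq (ENNReal.tsum_const_eq_top_of_ne_zero one_ne_zero).symm

lemma hausMeas_eq_iSup {X : Type*} [MetricSpace X] (d : ℝ) (S : Set X) :
    hausMeas d S = ⨆ n : ℕ, preHaus d (1 / (n + 1)) S := by
  refine le_antisymm (iSup₂_le fun δ hδ => ?_) (iSup_le fun n => ?_)
  · obtain ⟨n, hn⟩ := exists_nat_one_div_lt hδ
    exact le_trans (preHaus_anti d hn.le S) (le_iSup (fun n : ℕ => preHaus d (1 / (n + 1)) S) n)
  · exact le_iSup₂ (f := fun δ (_ : 0 < δ) => preHaus d δ S) (1 / (n + 1 : ℝ)) (by positivity)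

lemma preHaus_le_cover {X : Type*} [MetricSpace X] {d δ : ℝ} {S : Set X} (B : ℕ → Set X)
    (h1 : S ⊆ ⋃ i, B i) (h2 : ∀ i, EMetric.diam (B i) < ENNReal.ofReal δ) :
    preHaus d δ S ≤ ENNReal.ofReal (vball d / 2 ^ d) * ∑' i, EMetric.diam (B i) ^ d := by
  refine mul_le_mul_right ?_ _
  exact iInf_le_of_le B (iInf_le_of_le h1 (iInf_le_of_le h2 le_rfl))

lemma usc_pos {X : Type*} [MetricSpace X] [CompactSpace X] {d δ : ℝ} (hd : 0 < d) (hδ : 0 < δ)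
    (u : X → ℝ) (hu : Continuous u) (A : Set X) (hA : IsCompact A) :
    UpperSemicontinuous (fun t : ℝ => preHaus d δ (u ⁻¹' {t} ∩ A)) := by
  intro t a ha
  set c := ENNReal.ofReal (vball d / 2 ^ d) with hc
  rcases eq_or_ne c 0 with h0 | hcne
  · have hz : ∀ s : Set X, preHaus d δ s = 0 := fun s => by
      rw [preHaus, ← hc, h0, zero_mul]
    filter_upwards with t'
    rw [hz]
    exact lt_of_le_of_lt zero_le ha
  have hctop : c ≠ ∞ := ENNReal.ofReal_ne_top
  -- extract an almost optimal cover
  have hIlt : (⨅ (B : ℕ → Set X) (_ : u ⁻¹' {t} ∩ A ⊆ ⋃ i, B i)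
      (_ : ∀ i, EMetric.diam (B i) < ENNReal.ofReal δ), ∑' i, EMetric.diam (B i) ^ d) < a / c := by
    rw [ENNReal.lt_div_iff_mul_lt (Or.inl hcne) (Or.inl hctop), mul_comm]
    exact ha
  simp only [iInf_lt_iff] at hIlt
  obtain ⟨B, hcov, hdiam, hsum⟩ := hIlt
  obtain ⟨s, hSs, hsa⟩ := exists_between hsum
  set D : ℕ → ℝ≥0∞ := fun i => EMetric.diam (B i) with hD
  set η : ℕ → ℝ≥0∞ := fun i => (s - ∑' i, D i ^ d) * 2⁻¹ ^ (i + 1) with hη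
  have hηpos : ∀ i, η i ≠ 0 := fun i =>
    mul_ne_zero (tsub_pos_of_lt hSs).ne' (pow_ne_zero _ (ENNReal.inv_ne_zero.mpr ENNReal.ofNat_ne_top))
  have hDtop : ∀ i, D i ≠ ∞ := fun i => ((hdiam i).trans_le le_top).ne
  -- choose thickening radii
  have hchoice : ∀ i : ℕ, ∃ ε : ℝ≥0, 0 < ε ∧ D i + 2 * (ε : ℝ≥0∞) < ENNReal.ofReal δ ∧
      (D i + 2 * (ε : ℝ≥0∞)) ^ d < D i ^ d + η i := by
    intro i
    have h2 : Filter.Tendsto (fun ε : ℝ≥0 => 2 * (ε : ℝ≥0∞)) (nhds 0) (nhds 0) := by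
      simpa using ENNReal.Tendsto.const_mul (a := 2) (ENNReal.continuous_coe.tendsto 0)
        (Or.inr ENNReal.ofNat_ne_top)
    have htend : Filter.Tendsto (fun ε : ℝ≥0 => D i + 2 * (ε : ℝ≥0∞)) (nhds 0) (nhds (D i)) := by
      simpa using Filter.Tendsto.add (tendsto_const_nhds (x := D i)) h2
    have ev1 := htend.eventually_lt_const (hdiam i)
    have ev2 := (htend.ennrpow_const d).eventually_lt_const
      (ENNReal.lt_add_right (ENNReal.rpow_lt_top_of_nonneg hd.le (hDtop i)).ne (hηpos i))
    obtain ⟨ε, ⟨h1, h2⟩, h3⟩ :=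
      (((ev1.and ev2).filter_mono nhdsWithin_le_nhds).and (eventually_mem_nhdsWithin
        (s := Set.Ioi (0 : ℝ≥0)))).exists
    exact ⟨ε, h3, h1, h2⟩
  choose ε hεpos hεδ hεd using hchoice
  set U : ℕ → Set X := fun i => Metric.thickening (ε i : ℝ) (B i) with hU
  have hBU : ∀ i, B i ⊆ U i := fun i =>
    Metric.self_subset_thickening (by exact_mod_cast hεpos i) _
  have hUopen : ∀ i, IsOpen (U i) := fun i => Metric.isOpen_thickening
  have hUdiam : ∀ i, EMetric.diam (U i) ≤ D i + 2 * (ε i : ℝ≥0∞) := fun i =>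
    Metric.ediam_thickening_le (ε i)
  have hUδ : ∀ i, EMetric.diam (U i) < ENNReal.ofReal δ := fun i =>
    lt_of_le_of_lt (hUdiam i) (hεδ i)
  have hUd : ∀ i, EMetric.diam (U i) ^ d < D i ^ d + η i := fun i =>
    lt_of_le_of_lt (ENNReal.rpow_le_rpow (hUdiam i) hd.le) (hεd i)
  -- finite subcover
  have hC : IsCompact (u ⁻¹' {t} ∩ A) := hA.inter_left (isClosed_singleton.preimage hu)
  obtain ⟨F, hF⟩ := hC.elim_finite_subcover U hUopen (hcov.trans (Set.iUnion_mono hBU))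
  have hWopen : IsOpen (⋃ i ∈ F, U i) := isOpen_biUnion fun i _ => hUopen i
  have hKc : IsCompact (A \ ⋃ i ∈ F, U i) := hA.diff hWopen
  have himg : IsClosed (u '' (A \ ⋃ i ∈ F, U i)) := (hKc.image hu).isClosed
  have htni : t ∉ u '' (A \ ⋃ i ∈ F, U i) := by
    rintro ⟨x, ⟨hxA, hxW⟩, hxu⟩
    exact hxW (hF ⟨hxu, hxA⟩)
  filter_upwards [himg.isOpen_compl.mem_nhds htni] with t' ht'
  set B' : ℕ → Set X := fun i => if i ∈ F then U i else ∅ with hB'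
  have hcov' : u ⁻¹' {t'} ∩ A ⊆ ⋃ i, B' i := by
    rintro x ⟨hxu, hxA⟩
    have hxW : x ∈ ⋃ i ∈ F, U i := by
      by_contra hxW
      exact ht' ⟨x, ⟨hxA, hxW⟩, hxu⟩
    obtain ⟨i, hiF, hxU⟩ := Set.mem_iUnion₂.1 hxW
    exact Set.mem_iUnion.2 ⟨i, by simp only [hB', if_pos hiF]; exact hxU⟩
  have hdiam' : ∀ i, EMetric.diam (B' i) < ENNReal.ofReal δ := by
    intro i
    by_cases hi : i ∈ F
    · simpa only [hB', if_pos hi] using hUδ i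
    · simp only [hB', if_neg hi, EMetric.diam_empty]
      exact lt_of_le_of_lt (le_of_eq EMetric.diam_empty) (ENNReal.ofReal_pos.mpr hδ)
  have hsum' : (∑' i, EMetric.diam (B' i) ^ d) ≤ s := by
    have hle : ∀ i, EMetric.diam (B' i) ^ d ≤ D i ^ d + η i := by
      intro i
      by_cases hi : i ∈ F
      · simpa only [hB', if_pos hi] using (hUd i).le
      · simp only [hB', if_neg hi, EMetric.diam_empty, ENNReal.zero_rpow_of_pos hd]
        exact le_of_eq_of_le (by rw [show EMetric.diam (∅ : Set X) = 0 from EMetric.diam_empty, ENNReal.zero_rpow_of_pos hd]) zero_le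
    have hgeo : (∑' i : ℕ, (2⁻¹ : ℝ≥0∞) ^ (i + 1)) ≤ 1 := by
      have h1 : (∑' i : ℕ, (2⁻¹ : ℝ≥0∞) ^ (i + 1)) = 2⁻¹ * ∑' i : ℕ, (2⁻¹ : ℝ≥0∞) ^ i := by
        rw [← ENNReal.tsum_mul_left]
        congr 1; funext i; rw [pow_succ, mul_comm]
      rw [h1, ENNReal.tsum_geometric, ENNReal.one_sub_inv_two, inv_inv]
      exact le_of_eq (ENNReal.inv_mul_cancel two_ne_zero ENNReal.ofNat_ne_top)
    calc (∑' i, EMetric.diam (B' i) ^ d) ≤ ∑' i, (D i ^ d + η i) :=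
          ENNReal.tsum_le_tsum hle
      _ = (∑' i, D i ^ d) + ∑' i, η i := ENNReal.tsum_add
      _ ≤ (∑' i, D i ^ d) + (s - ∑' i, D i ^ d) := by
          refine add_le_add_right ?_ _
          rw [hη, ENNReal.tsum_mul_left]
          exact mul_le_of_le_one_right' hgeo
      _ = s := add_tsub_cancel_of_le hSs.le
  calc preHaus d δ (u ⁻¹' {t'} ∩ A) ≤ c * ∑' i, EMetric.diam (B' i) ^ d :=
        preHaus_le_cover B' hcov' hdiam'
    _ ≤ c * s := mul_le_mul_right hsum' c
    _ < a := ENNReal.mul_lt_of_lt_div' hsa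

theorem stmt3 {X : Type*} [MetricSpace X] [CompactSpace X] (N : ℝ) (hN : 1 ≤ N)
    (hfin : hausMeas N (Set.univ : Set X) < ∞)
    (u : X → ℝ) (K : ℝ≥0) (hu : LipschitzWith K u)
    (A : Set X) (hA : IsCompact A) :
    (∀ δ : ℝ, 0 < δ →
      UpperSemicontinuous (fun t : ℝ => preHaus (N - 1) δ (u ⁻¹' {t} ∩ A))) ∧
    Measurable (fun t : ℝ => hausMeas (N - 1) (u ⁻¹' {t} ∩ A)) := by
  rcases eq_or_lt_of_le hN with h1 | h1
  · -- N = 1 : everything is constant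
    have hd : N - 1 = 0 := by rw [← h1]; ring
    constructor
    · intro δ hδ
      have : (fun t : ℝ => preHaus (N - 1) δ (u ⁻¹' {t} ∩ A)) =
          fun _ => ENNReal.ofReal (vball 0 / 2 ^ (0:ℝ)) * ⊤ := by
        funext t; rw [hd, preHaus_zero_dim]
      rw [this]
      exact upperSemicontinuous_const
    · have : (fun t : ℝ => hausMeas (N - 1) (u ⁻¹' {t} ∩ A)) =
          fun _ => ⨆ (δ : ℝ) (_ : 0 < δ), ENNReal.ofReal (vball 0 / 2 ^ (0:ℝ)) * ⊤ := by
        funext t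
        rw [hausMeas, hd]
        congr 1; funext δ; congr 1; funext hδ; exact preHaus_zero_dim δ _
      rw [this]
      exact measurable_const
  · have hd : 0 < N - 1 := by linarith
    have husc : ∀ δ : ℝ, 0 < δ →
        UpperSemicontinuous (fun t : ℝ => preHaus (N - 1) δ (u ⁻¹' {t} ∩ A)) :=
      fun δ hδ => usc_pos hd hδ u hu.continuous A hA
    refine ⟨husc, ?_⟩
    have : (fun t : ℝ => hausMeas (N - 1) (u ⁻¹' {t} ∩ A)) =
        fun t => ⨆ n : ℕ, preHaus (N - 1) (1 / (n + 1)) (u ⁻¹' {t} ∩ A) := by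
      funext t; exact hausMeas_eq_iSup _ _
    rw [this]
    exact Measurable.iSup fun n => (husc _ (by positivity)).measurable
end

section
/- Let X be a compact metric space with finite H^N measure, u : X → ℝ a nonnegative Lipschitz function, and g : X → [0,∞) a continuous function that is a local Lipschitz upper gradient for u (for every x there is r_x > 0 so that for all r ∈ (0, r_x), the Lipschitz constant of u restricted to B(x,r) is at most sup_{y ∈ B(x,2r)} g(y)). Then for every Borel set A ⊆ X: ∫_{-∞}^{∞} H^{N-1}(u^{-1}(t) ∩ A) dt ≤ (2 v_{N-1} / v_N) ∫_A g dH^N, where v_k = π^{k/2}/Γ(k/2 + 1). -/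
open MeasureTheory Set ENNReal Filter Topology EMetric
open scoped NNReal

private lemma eilenberg_main {X : Type*} [MetricSpace X] [MeasurableSpace X] [BorelSpace X]
    (N : ℝ) (hN : 1 ≤ N) (u : X → ℝ) (B : Set X) (L : ℝ) (hL : 0 ≤ L)
    (hlip : ∀ y ∈ B, ∀ z ∈ B, |u y - u z| ≤ L * dist y z)
    (η : ℝ≥0∞) (hη : 0 < η) (hLpos : 0 < L) (hBfin : μH[N] B ≠ ∞) :
    ∃ c : ℝ → ℝ≥0∞, Measurable c ∧ (∀ t : ℝ, μH[N - 1] (u ⁻¹' {t} ∩ B) ≤ c t) ∧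
      ∫⁻ t, c t ≤ ENNReal.ofReal L * μH[N] B + η := by
  classical
  set oL := ENNReal.ofReal L with hoL
  have hoL0 : oL ≠ 0 := by simp [hoL, hLpos]
  have hoLtop : oL ≠ ∞ := ENNReal.ofReal_ne_top
  set η' : ℝ≥0∞ := η / (oL + 1) with hη'def
  have hη'0 : 0 < η' := ENNReal.div_pos hη.ne' (by finiteness)
  have hLη' : oL * η' ≤ η := by
    calc oL * η' ≤ (oL + 1) * (η / (oL + 1)) := by gcongr; exact le_self_add
    _ = η := ENNReal.mul_div_cancel (by simp) (by finiteness)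
  -- scales
  set δ : ℕ → ℝ≥0∞ := fun m => ((m : ℝ≥0∞) + 1)⁻¹ with hδdef
  have hδpos : ∀ m, 0 < δ m := fun m => ENNReal.inv_pos.mpr (by finiteness)
  have hδne : ∀ m, δ m ≠ ∞ := fun m => ENNReal.inv_ne_top.mpr (by simp)
  have hδ0 : Tendsto δ atTop (𝓝 0) := by
    have h := ENNReal.tendsto_inv_nat_nhds_zero.comp (tendsto_add_atTop_nat 1)
    have : (fun m : ℕ => (((m + 1 : ℕ) : ℝ≥0∞))⁻¹) = δ := by
      funext m; push_cast; rfl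
    rwa [Function.comp_def, this] at h
  -- choose covers
  have hcov : ∀ m : ℕ, ∃ E : ℕ → Set X, (B ⊆ ⋃ n, E n) ∧ (∀ n, diam (E n) ≤ δ m) ∧
      ∑' n, ⨆ _ : (E n).Nonempty, diam (E n) ^ N ≤ μH[N] B + η' := by
    intro m
    have h1 : (⨅ (t : ℕ → Set X) (_ : B ⊆ ⋃ n, t n) (_ : ∀ n, diam (t n) ≤ δ m),
        ∑' n, ⨆ _ : (t n).Nonempty, diam (t n) ^ N) ≤ μH[N] B := by
      rw [Measure.hausdorffMeasure_apply]
      exact le_iSup₂ (f := fun (r : ℝ≥0∞) (_ : 0 < r) =>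
        ⨅ (t : ℕ → Set X) (_ : B ⊆ ⋃ n, t n) (_ : ∀ n, diam (t n) ≤ r),
          ∑' n, ⨆ _ : (t n).Nonempty, diam (t n) ^ N) (δ m) (hδpos m)
    have h2 := h1.trans_lt (ENNReal.lt_add_right hBfin hη'0.ne')
    rw [iInf_lt_iff] at h2
    obtain ⟨E, hE⟩ := h2
    rw [iInf_lt_iff] at hE
    obtain ⟨hE1, hE⟩ := hE
    rw [iInf_lt_iff] at hE
    obtain ⟨hE2, hE⟩ := hE
    exact ⟨E, hE1, hE2, hE.le⟩
  choose E hEcov hEdiam hEsum using hcov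
  have hDne : ∀ m n, diam (E m n) ≠ ∞ := fun m n =>
    ((hEdiam m n).trans_lt (lt_top_iff_ne_top.mpr (hδne m))).ne
  -- intervals
  set aI : ℕ → ℕ → Set ℝ := fun m n =>
    if (E m n ∩ B).Nonempty then
      Icc (sInf (u '' (E m n ∩ B)))
        (sInf (u '' (E m n ∩ B)) + L * (diam (E m n)).toReal)
    else ∅ with haIdef
  have hImeas : ∀ m n, MeasurableSet (aI m n) := by
    intro m n
    rw [haIdef]
    dsimp only
    split
    · exact measurableSet_Icc
    · exact MeasurableSet.empty
  -- oscillation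
  have habs : ∀ m n, ∀ x ∈ E m n ∩ B, ∀ z ∈ E m n ∩ B,
      |u x - u z| ≤ L * (diam (E m n)).toReal := by
    intro m n x hx z hz
    refine (hlip x hx.2 z hz.2).trans (mul_le_mul_of_nonneg_left ?_ hL)
    rw [dist_edist]
    exact ENNReal.toReal_mono (hDne m n) (EMetric.edist_le_diam_of_mem hx.1 hz.1)
  have hosc : ∀ m n, ∀ x ∈ E m n ∩ B, u x ∈ aI m n := by
    intro m n x hx
    have hne : (E m n ∩ B).Nonempty := ⟨x, hx⟩
    rw [haIdef]
    dsimp only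
    rw [if_pos hne]
    set D := (diam (E m n)).toReal with hD
    have hbdd : BddBelow (u '' (E m n ∩ B)) := by
      refine ⟨u x - L * D, ?_⟩
      rintro _ ⟨z, hz, rfl⟩
      have := habs m n x hx z hz
      rw [abs_le] at this
      linarith [this.2]
    constructor
    · exact csInf_le hbdd ⟨x, hx, rfl⟩
    · have h1 : u x - L * D ≤ sInf (u '' (E m n ∩ B)) := by
        refine le_csInf ⟨u x, x, hx, rfl⟩ ?_
        rintro _ ⟨z, hz, rfl⟩
        have := habs m n x hx z hz
        rw [abs_le] at this
        linarith [this.1]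
      linarith
  -- the majorant sequence
  set cm : ℕ → ℝ → ℝ≥0∞ := fun m t =>
    ∑' n, diam (E m n) ^ (N - 1) * (aI m n).indicator 1 t with hcmdef
  have hcm_meas : ∀ m, Measurable (cm m) := fun m =>
    Measurable.ennreal_tsum fun n => (measurable_const.indicator (hImeas m n)).const_mul _
  refine ⟨fun t => liminf (fun m => cm m t) atTop, Measurable.liminf hcm_meas, ?_, ?_⟩
  · -- pointwise bound
    intro t
    have hcover : ∀ m, u ⁻¹' {t} ∩ B ⊆ ⋃ i : {n : ℕ // t ∈ aI m n}, E m (i : ℕ) := by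
      intro m x hx
      obtain ⟨hxt, hxB⟩ := hx
      obtain ⟨n, hn⟩ := mem_iUnion.mp (hEcov m hxB)
      have ht : t ∈ aI m n := by
        have := hosc m n x ⟨hn, hxB⟩
        rwa [show u x = t from hxt] at this
      exact mem_iUnion.mpr ⟨⟨n, ht⟩, hn⟩
    have h1 : μH[N - 1] (u ⁻¹' {t} ∩ B) ≤
        liminf (fun m => ∑' i : {n : ℕ // t ∈ aI m n}, diam (E m (i : ℕ)) ^ (N - 1)) atTop :=
      Measure.hausdorffMeasure_le_liminf_tsum (ι := fun m => {n : ℕ // t ∈ aI m n})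
        _ _ δ hδ0 (fun m i => E m (i : ℕ))
        (Eventually.of_forall fun m i => hEdiam m (i : ℕ)) (Eventually.of_forall hcover)
    refine h1.trans (le_of_eq (liminf_congr (Eventually.of_forall fun m => ?_)))
    refine Eq.trans (tsum_subtype {n : ℕ | t ∈ aI m n} fun n => diam (E m n) ^ (N - 1)) ?_
    refine tsum_congr fun n => ?_
    by_cases h : t ∈ aI m n
    · simp [Set.indicator_of_mem, h, Set.mem_setOf_eq]
    · simp [h]
  · -- integral bound
    have hint : ∀ m, ∫⁻ t, cm m t ≤ oL * μH[N] B + η := by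
      intro m
      rw [hcmdef]
      dsimp only
      rw [lintegral_tsum (f := fun n (t : ℝ) => diam (E m n) ^ (N - 1) * (aI m n).indicator 1 t)
        (fun n => ((measurable_one.indicator (hImeas m n)).const_mul _).aemeasurable)]
      have hterm : ∀ n, ∫⁻ t, diam (E m n) ^ (N - 1) * (aI m n).indicator 1 t
          ≤ oL * ⨆ _ : (E m n).Nonempty, diam (E m n) ^ N := by
        intro n
        rw [lintegral_const_mul _ (measurable_one.indicator (hImeas m n)),
          lintegral_indicator_one (hImeas m n)]
        by_cases hne : (E m n ∩ B).Nonempty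
        · have hEne : (E m n).Nonempty := ⟨hne.some, hne.some_mem.1⟩
          rw [haIdef]
          dsimp only
          rw [if_pos hne, Real.volume_Icc, iSup_pos hEne]
          set D := diam (E m n) with hDdef
          have h3 : ENNReal.ofReal (sInf (u '' (E m n ∩ B)) + L * D.toReal
              - sInf (u '' (E m n ∩ B))) = oL * D := by
            rw [show sInf (u '' (E m n ∩ B)) + L * D.toReal - sInf (u '' (E m n ∩ B))
              = L * D.toReal by ring, ENNReal.ofReal_mul hL, ENNReal.ofReal_toReal (hDne m n)]
          rw [h3]
          rcases eq_or_ne D 0 with hD0 | hD0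
          · simp [hD0]
          · have h4 : D ^ (N - 1) * D = D ^ N := by
              nth_rewrite 2 [show D = D ^ (1:ℝ) from (ENNReal.rpow_one D).symm]
              rw [← ENNReal.rpow_add _ _ hD0 (hDne m n)]
              norm_num
            calc D ^ (N - 1) * (oL * D) = oL * (D ^ (N - 1) * D) := by ring
            _ ≤ oL * D ^ N := by rw [h4]
        · rw [haIdef]
          dsimp only
          rw [if_neg hne]
          simp
      calc ∑' n, ∫⁻ t, diam (E m n) ^ (N - 1) * (aI m n).indicator 1 t
          ≤ ∑' n, oL * ⨆ _ : (E m n).Nonempty, diam (E m n) ^ N := ENNReal.tsum_le_tsum hterm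
        _ = oL * ∑' n, ⨆ _ : (E m n).Nonempty, diam (E m n) ^ N := ENNReal.tsum_mul_left
        _ ≤ oL * (μH[N] B + η') := by gcongr; exact hEsum m
        _ = oL * μH[N] B + oL * η' := mul_add _ _ _
        _ ≤ oL * μH[N] B + η := add_le_add_right hLη' _
    calc ∫⁻ t, liminf (fun m => cm m t) atTop ≤ liminf (fun m => ∫⁻ t, cm m t) atTop :=
        lintegral_liminf_le hcm_meas
      _ ≤ liminf (fun _ : ℕ => oL * μH[N] B + η) atTop :=
        liminf_le_liminf (Eventually.of_forall hint)
      _ = oL * μH[N] B + η := liminf_const _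

/-- Eilenberg-type inequality with a measurable majorant. -/
private lemma eilenberg_aux {X : Type*} [MetricSpace X] [MeasurableSpace X] [BorelSpace X]
    (N : ℝ) (hN : 1 ≤ N) (u : X → ℝ) (B : Set X) (L : ℝ) (hL : 0 ≤ L)
    (hlip : ∀ y ∈ B, ∀ z ∈ B, |u y - u z| ≤ L * dist y z)
    (η : ℝ≥0∞) (hη : 0 < η) :
    ∃ c : ℝ → ℝ≥0∞, Measurable c ∧ (∀ t : ℝ, μH[N - 1] (u ⁻¹' {t} ∩ B) ≤ c t) ∧
      ∫⁻ t, c t ≤ ENNReal.ofReal L * μH[N] B + η := by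
  rcases eq_or_lt_of_le hL with hL0 | hLpos
  · -- L = 0 : u is constant on B
    rcases B.eq_empty_or_nonempty with rfl | ⟨b, hb⟩
    · exact ⟨0, measurable_const, fun t => by simp, by simp⟩
    · refine ⟨({u b} : Set ℝ).indicator (fun _ => ∞), (measurable_const.indicator
        (measurableSet_singleton _)), fun t => ?_, ?_⟩
      · by_cases ht : t = u b
        · simp [ht, Set.indicator_of_mem]
        · have : u ⁻¹' {t} ∩ B = ∅ := by
            ext x
            simp only [mem_inter_iff, mem_preimage, mem_singleton_iff, mem_empty_iff_false,
              iff_false, not_and]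
            intro hx hxB
            have := hlip x hxB b hb
            rw [← hL0] at this
            simp only [zero_mul, abs_nonpos_iff, sub_eq_zero] at this
            exact ht (hx ▸ this)
          simp [Set.indicator_of_notMem ht, this]
      · rw [lintegral_indicator (measurableSet_singleton _)]
        simp [Real.volume_singleton]
  · -- L > 0
    by_cases hBfin : μH[N] B = ∞
    · refine ⟨fun _ => ∞, measurable_const, fun t => le_top, ?_⟩
      have : ENNReal.ofReal L * μH[N] B = ∞ := by
        rw [hBfin, ENNReal.mul_top (by simpa using hLpos)]
      simp [this]
    · exact eilenberg_main N hN u B L hL hlip η hη hLpos hBfin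

/-- The `d`-dimensional Hausdorff measure with the paper's normalization `v_d / 2^d`. -/
noncomputable def hMeas {X : Type*} [MetricSpace X] [MeasurableSpace X] [BorelSpace X]
    (d : ℝ) : Measure X :=
  ENNReal.ofReal (vball d / 2 ^ d) • μH[d]

/-- `g` is a local Lipschitz upper gradient of `u`: for each `x` there is `r_x > 0`
such that for all `r ∈ (0, r_x)` the Lipschitz constant of `u` on `B(x,r)` is at most
`sup_{B(x,2r)} g`. -/
def LocalLipUpperGradient {X : Type*} [MetricSpace X] (u : X → ℝ) (g : X → ℝ) : Prop :=
  ∀ x : X, ∃ rx > 0, ∀ r ∈ Set.Ioo (0 : ℝ) rx, ∀ y ∈ Metric.ball x r, ∀ z ∈ Metric.ball x r,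
    |u y - u z| ≤ (⨆ w : Metric.ball x (2 * r), g w) * dist y z


lemma vball_pos {k : ℝ} (hk : 0 ≤ k) : 0 < vball k := by
  unfold vball
  apply div_pos (Real.rpow_pos_of_pos Real.pi_pos _)
  apply Real.Gamma_pos_of_pos
  linarith

theorem stmt5 {X : Type*} [MetricSpace X] [CompactSpace X] [MeasurableSpace X] [BorelSpace X]
    (N : ℝ) (hN : 1 ≤ N) (hfin : hMeas N (univ : Set X) < ∞)
    (u : X → ℝ) (hu0 : ∀ x, 0 ≤ u x) (K : ℝ≥0) (hulip : LipschitzWith K u)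
    (g : X → ℝ) (hg : Continuous g) (hg0 : ∀ x, 0 ≤ g x)
    (hug : LocalLipUpperGradient u g)
    (A : Set X) (hA : MeasurableSet A) :
    ∫⁻ t : ℝ, hMeas (N - 1) (u ⁻¹' {t} ∩ A) ≤
      ENNReal.ofReal (2 * vball (N - 1) / vball N) *
        ∫⁻ x in A, ENNReal.ofReal (g x) ∂(hMeas N) := by
  classical
  have hN1 : (0:ℝ) ≤ N - 1 := by linarith
  have hv1 : 0 < vball (N - 1) := vball_pos hN1
  have hvN : 0 < vball N := vball_pos (by linarith)
  have h2pow1 : (0:ℝ) < 2 ^ (N - 1) := Real.rpow_pos_of_pos two_pos _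
  have h2powN : (0:ℝ) < 2 ^ N := Real.rpow_pos_of_pos two_pos _
  set C : ℝ := vball (N - 1) / 2 ^ (N - 1) with hCdef
  have hCpos : 0 < C := div_pos hv1 h2pow1
  set c₁ : ℝ≥0∞ := ENNReal.ofReal C with hc1
  set c₂ : ℝ≥0∞ := ENNReal.ofReal (vball N / 2 ^ N) with hc2
  have hc2pos : (0:ℝ) < vball N / 2 ^ N := div_pos hvN h2powN
  have hkey : C = (2 * vball (N - 1) / vball N) * (vball N / 2 ^ N) := by
    have h2 : (2:ℝ) ^ N = 2 ^ (1:ℝ) * 2 ^ (N - 1) := by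
      rw [← Real.rpow_add two_pos]; norm_num
    rw [Real.rpow_one] at h2
    rw [hCdef, h2]
    field_simp
  have hc1eq : c₁ = ENNReal.ofReal (2 * vball (N - 1) / vball N) * c₂ := by
    rw [hc1, hc2, ← ENNReal.ofReal_mul (by positivity), hkey]
  have hμfin : μH[N] (univ : Set X) ≠ ∞ := by
    intro h
    have h1 : hMeas N (univ : Set X) = c₂ * μH[N] (univ : Set X) := by
      simp [hMeas, hc2, Measure.smul_apply, smul_eq_mul]
    rw [h1, h, ENNReal.mul_top (by simp [hc2, hc2pos])] at hfin
    exact (lt_irrefl _ hfin).elim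
  have hum : Measurable u := hulip.continuous.measurable
  set S : ℝ≥0∞ := ∫⁻ x in A, ENNReal.ofReal (g x) ∂μH[N] with hSdef
  have hRHS : ∫⁻ x in A, ENNReal.ofReal (g x) ∂(hMeas N) = c₂ * S := by
    rw [hMeas, Measure.restrict_smul, lintegral_smul_measure, hc2, hSdef, smul_eq_mul]
  refine ENNReal.le_of_forall_pos_le_add fun ε' hε' _ => ?_
  set Mr : ℝ := (μH[N] (univ : Set X)).toReal with hMr
  have hMr0 : 0 ≤ Mr := ENNReal.toReal_nonneg
  have hε'R : (0:ℝ) < (ε' : ℝ) := hε'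
  set ε : ℝ := (ε' : ℝ) / (8 * (C + 1) * (Mr + 1)) with hε
  have hεpos : 0 < ε := by positivity
  set η : ℝ≥0∞ := ENNReal.ofReal ((ε' : ℝ) / (2 * (C + 1))) with hη
  have hηpos : 0 < η := by
    rw [hη]; exact ENNReal.ofReal_pos.mpr (by positivity)
  -- local Lipschitz constants
  have hloc : ∀ x : X, ∃ ρ > 0, (∀ y ∈ Metric.ball x ρ, ∀ z ∈ Metric.ball x ρ,
      |u y - u z| ≤ (g x + ε) * dist y z) ∧ ∀ y ∈ Metric.ball x ρ, g x ≤ g y + ε := by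
    intro x
    obtain ⟨rx, hrx, hx⟩ := hug x
    obtain ⟨ρ₀, hρ₀, hρc⟩ := Metric.continuous_iff.mp hg x ε hεpos
    have hrpos : 0 < min (rx / 2) (ρ₀ / 2) := by positivity
    refine ⟨min (rx / 2) (ρ₀ / 2), hrpos, ?_, ?_⟩
    · intro y hy z hz
      have hrlt : min (rx / 2) (ρ₀ / 2) < rx := (min_le_left _ _).trans_lt (by linarith)
      have h1 := hx _ ⟨hrpos, hrlt⟩ y hy z hz
      refine h1.trans (mul_le_mul_of_nonneg_right ?_ dist_nonneg)
      haveI : Nonempty (Metric.ball x (2 * min (rx / 2) (ρ₀ / 2))) :=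
        ⟨⟨x, Metric.mem_ball_self (by positivity)⟩⟩
      refine ciSup_le fun w => ?_
      have hw : dist (w : X) x < ρ₀ := by
        have h2 := w.2
        rw [Metric.mem_ball] at h2
        have : 2 * min (rx / 2) (ρ₀ / 2) ≤ ρ₀ := by
          have := min_le_right (rx / 2) (ρ₀ / 2); linarith
        linarith
      have h3 := hρc _ hw
      rw [Real.dist_eq] at h3
      have := abs_lt.mp h3
      linarith [this.1, this.2]
    · intro y hy
      rw [Metric.mem_ball] at hy
      have hw : dist y x < ρ₀ := by
        have := min_le_right (rx / 2) (ρ₀ / 2); linarith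
      have h3 := hρc _ hw
      rw [Real.dist_eq] at h3
      have := abs_lt.mp h3
      linarith [this.1, this.2]
  choose ρ hρ hlipb hgb using hloc
  -- finite subcover
  obtain ⟨s, hs⟩ := isCompact_univ.elim_finite_subcover (fun x : X => Metric.ball x (ρ x))
    (fun x => Metric.isOpen_ball) (fun x _ => mem_iUnion.mpr ⟨x, Metric.mem_ball_self (hρ x)⟩)
  set n : ℕ := Fintype.card ↥s with hn
  set e : Fin n → X := fun i => ((Fintype.equivFin ↥s).symm i : X) with he
  set f : ℕ → Set X := fun k =>
    if h : k < n then Metric.ball (e ⟨k, h⟩) (ρ (e ⟨k, h⟩)) else ∅ with hf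
  have hfmeas : ∀ k, MeasurableSet (f k) := by
    intro k; rw [hf]; dsimp only; split
    · exact measurableSet_ball
    · exact MeasurableSet.empty
  have hfU : ⋃ k, f k = univ := by
    refine eq_univ_of_forall fun x => ?_
    obtain ⟨a, ha, hxa⟩ := mem_iUnion₂.mp (hs (mem_univ x))
    set i := Fintype.equivFin ↥s ⟨a, ha⟩ with hi
    refine mem_iUnion.mpr ⟨(i : ℕ), ?_⟩
    rw [hf]; dsimp only
    rw [dif_pos i.isLt]
    have hei : e ⟨(i : ℕ), i.isLt⟩ = a := by
      rw [he]
      show (((Fintype.equivFin ↥s).symm ⟨(i : ℕ), i.isLt⟩ : ↥s) : X) = a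
      have : (⟨(i : ℕ), i.isLt⟩ : Fin n) = i := rfl
      rw [this, hi, Equiv.symm_apply_apply]
    rw [hei]
    exact hxa
  set P : ℕ → Set X := fun k => A ∩ disjointed f k with hP
  have hPmeas : ∀ k, MeasurableSet (P k) := fun k => hA.inter (MeasurableSet.disjointed hfmeas k)
  have hPdisj : Pairwise (Function.onFun Disjoint P) := fun i j hij =>
    ((disjoint_disjointed f hij).mono inter_subset_right inter_subset_right)
  have hPU : ⋃ k, P k = A := by
    rw [hP]
    simp only [← inter_iUnion, iUnion_disjointed, hfU, inter_univ]
  have hPf : ∀ k, P k ⊆ f k := fun k => inter_subset_right.trans (disjointed_subset f k)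
  set Lp : ℕ → ℝ := fun k => if h : k < n then g (e ⟨k, h⟩) + ε else 0 with hLp
  have hLp0 : ∀ k, 0 ≤ Lp k := by
    intro k; rw [hLp]; dsimp only; split
    · have := hg0 (e ⟨k, ‹_›⟩); linarith
    · exact le_rfl
  have hball : ∀ k (h : k < n), ∀ x ∈ P k, x ∈ Metric.ball (e ⟨k, h⟩) (ρ (e ⟨k, h⟩)) := by
    intro k h x hx
    have := hPf k hx
    rw [hf] at this; dsimp only at this; rwa [dif_pos h] at this
  have hlipP : ∀ k, ∀ y ∈ P k, ∀ z ∈ P k, |u y - u z| ≤ Lp k * dist y z := by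
    intro k y hy z hz
    by_cases h : k < n
    · have hy' := hball k h y hy
      have hz' := hball k h z hz
      rw [hLp]; dsimp only; rw [dif_pos h]
      exact hlipb _ y hy' z hz'
    · exfalso
      have := hPf k hy
      rw [hf] at this; dsimp only at this; rw [dif_neg h] at this
      exact this
  have hgP : ∀ k, ∀ x ∈ P k, Lp k ≤ g x + 2 * ε := by
    intro k x hx
    by_cases h : k < n
    · have hx' := hball k h x hx
      rw [hLp]; dsimp only; rw [dif_pos h]
      have := hgb (e ⟨k, h⟩) x hx'
      linarith
    · rw [hLp]; dsimp only; rw [dif_neg h]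
      have := hg0 x; linarith
  -- per-piece Eilenberg
  set ηk : ℕ → ℝ≥0∞ := fun k => η * 2⁻¹ ^ (k + 1) with hηk
  have hηkpos : ∀ k, 0 < ηk k := by
    intro k
    rw [hηk]
    exact ENNReal.mul_pos hηpos.ne' (pow_ne_zero _ (ENNReal.inv_ne_zero.mpr (by simp)))
  have hηsum : ∑' k, ηk k = η := by
    rw [hηk]
    dsimp only
    rw [ENNReal.tsum_mul_left]
    have h1 : ∑' k : ℕ, (2⁻¹ : ℝ≥0∞) ^ (k + 1) = 2⁻¹ * ∑' k : ℕ, (2⁻¹ : ℝ≥0∞) ^ k := by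
      rw [← ENNReal.tsum_mul_left]
      exact tsum_congr fun k => (pow_succ' _ _)
    rw [h1, ENNReal.tsum_geometric, ENNReal.one_sub_inv_two, inv_inv,
      ENNReal.inv_mul_cancel (by simp) (by simp), mul_one]
  have hEil := fun k => eilenberg_aux N hN u (P k) (Lp k) (hLp0 k) (hlipP k) (ηk k) (hηkpos k)
  choose c hcmeas hcbd hcint using hEil
  -- pointwise bound
  have hpt : ∀ t, hMeas (N - 1) (u ⁻¹' {t} ∩ A) ≤ c₁ * ∑' k, c k t := by
    intro t
    have hsplit : μH[N - 1] (u ⁻¹' {t} ∩ A) = ∑' k, μH[N - 1] (u ⁻¹' {t} ∩ P k) := by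
      rw [show u ⁻¹' {t} ∩ A = ⋃ k, u ⁻¹' {t} ∩ P k by rw [← inter_iUnion, hPU]]
      exact measure_iUnion
        (fun i j hij => (hPdisj hij).mono inter_subset_right inter_subset_right)
        (fun k => (hum (measurableSet_singleton t)).inter (hPmeas k))
    have h1 : hMeas (N - 1) (u ⁻¹' {t} ∩ A) = c₁ * μH[N - 1] (u ⁻¹' {t} ∩ A) := by
      simp [hMeas, hc1, hCdef, Measure.smul_apply, smul_eq_mul]
    rw [h1, hsplit]
    exact mul_le_mul_right (ENNReal.tsum_le_tsum fun k => hcbd k t) _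
  have hI1 : ∫⁻ t, hMeas (N - 1) (u ⁻¹' {t} ∩ A) ≤ c₁ * ∑' k, ∫⁻ t, c k t := by
    refine (lintegral_mono hpt).trans ?_
    rw [lintegral_const_mul _ (Measurable.ennreal_tsum hcmeas),
      lintegral_tsum (fun k => (hcmeas k).aemeasurable)]
  -- sum bound
  have hmain : ∑' k, ENNReal.ofReal (Lp k) * μH[N] (P k)
      ≤ S + ENNReal.ofReal (2 * ε) * μH[N] A := by
    have hterm : ∀ k, ENNReal.ofReal (Lp k) * μH[N] (P k)
        ≤ ∫⁻ x in P k, (ENNReal.ofReal (g x) + ENNReal.ofReal (2 * ε)) ∂μH[N] := by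
      intro k
      refine le_trans (le_of_eq (setLIntegral_const (P k) _).symm)
        (setLIntegral_mono (hg.measurable.ennreal_ofReal.add measurable_const) fun x hx => ?_)
      calc ENNReal.ofReal (Lp k) ≤ ENNReal.ofReal (g x + 2 * ε) :=
            ENNReal.ofReal_le_ofReal (hgP k x hx)
        _ = ENNReal.ofReal (g x) + ENNReal.ofReal (2 * ε) :=
            ENNReal.ofReal_add (hg0 x) (by positivity)
    calc ∑' k, ENNReal.ofReal (Lp k) * μH[N] (P k)
        ≤ ∑' k, ∫⁻ x in P k, (ENNReal.ofReal (g x) + ENNReal.ofReal (2 * ε)) ∂μH[N] :=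
          ENNReal.tsum_le_tsum hterm
      _ = ∫⁻ x in ⋃ k, P k, (ENNReal.ofReal (g x) + ENNReal.ofReal (2 * ε)) ∂μH[N] :=
          (lintegral_iUnion hPmeas hPdisj _).symm
      _ = ∫⁻ x in A, (ENNReal.ofReal (g x) + ENNReal.ofReal (2 * ε)) ∂μH[N] := by rw [hPU]
      _ = S + ENNReal.ofReal (2 * ε) * μH[N] A := by
          rw [lintegral_add_right _ measurable_const, setLIntegral_const, hSdef]
  have hsum2 : ∑' k, ∫⁻ t, c k t ≤ S + ENNReal.ofReal (2 * ε) * μH[N] A + η := by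
    calc ∑' k, ∫⁻ t, c k t ≤ ∑' k, (ENNReal.ofReal (Lp k) * μH[N] (P k) + ηk k) :=
        ENNReal.tsum_le_tsum hcint
      _ = (∑' k, ENNReal.ofReal (Lp k) * μH[N] (P k)) + ∑' k, ηk k := ENNReal.tsum_add
      _ ≤ (S + ENNReal.ofReal (2 * ε) * μH[N] A) + η := by
          rw [hηsum]; exact add_le_add_left hmain _
  -- error terms
  have hμAle : μH[N] A ≤ ENNReal.ofReal Mr := by
    rw [hMr, ENNReal.ofReal_toReal hμfin]
    exact measure_mono (subset_univ A)
  have herr1 : c₁ * (ENNReal.ofReal (2 * ε) * μH[N] A) ≤ ENNReal.ofReal ((ε' : ℝ) / 2) := by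
    calc c₁ * (ENNReal.ofReal (2 * ε) * μH[N] A)
        ≤ c₁ * (ENNReal.ofReal (2 * ε) * ENNReal.ofReal Mr) := by gcongr
      _ = ENNReal.ofReal (C * (2 * ε * Mr)) := by
          rw [hc1, ← ENNReal.ofReal_mul (by positivity), ← ENNReal.ofReal_mul hCpos.le]
      _ ≤ ENNReal.ofReal ((ε' : ℝ) / 2) := by
          apply ENNReal.ofReal_le_ofReal
          have key : C * (2 * ((ε' : ℝ) / (8 * (C + 1) * (Mr + 1))) * Mr)
              = (C * Mr / ((C + 1) * (Mr + 1))) * ((ε' : ℝ) / 4) := by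
            field_simp
            ring
          rw [key]
          have h1 : C * Mr / ((C + 1) * (Mr + 1)) ≤ 1 := by
            rw [div_le_one (by positivity)]
            nlinarith
          calc (C * Mr / ((C + 1) * (Mr + 1))) * ((ε' : ℝ) / 4)
              ≤ 1 * ((ε' : ℝ) / 4) := mul_le_mul_of_nonneg_right h1 (by positivity)
            _ ≤ (ε' : ℝ) / 2 := by linarith
  have herr2 : c₁ * η ≤ ENNReal.ofReal ((ε' : ℝ) / 2) := by
    rw [hc1, hη, ← ENNReal.ofReal_mul hCpos.le]
    apply ENNReal.ofReal_le_ofReal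
    have key2 : C * ((ε' : ℝ) / (2 * (C + 1))) = (C / (C + 1)) * ((ε' : ℝ) / 2) := by
      field_simp
    rw [key2]
    have h1 : C / (C + 1) ≤ 1 := by
      rw [div_le_one (by linarith)]; linarith
    calc (C / (C + 1)) * ((ε' : ℝ) / 2) ≤ 1 * ((ε' : ℝ) / 2) :=
        mul_le_mul_of_nonneg_right h1 (by positivity)
      _ = (ε' : ℝ) / 2 := one_mul _
  -- final chain
  calc ∫⁻ t, hMeas (N - 1) (u ⁻¹' {t} ∩ A)
      ≤ c₁ * (S + ENNReal.ofReal (2 * ε) * μH[N] A + η) := hI1.trans (mul_le_mul_right hsum2 _)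
    _ = c₁ * S + (c₁ * (ENNReal.ofReal (2 * ε) * μH[N] A) + c₁ * η) := by ring
    _ ≤ c₁ * S + (ENNReal.ofReal ((ε' : ℝ) / 2) + ENNReal.ofReal ((ε' : ℝ) / 2)) := by
        exact add_le_add_right (add_le_add herr1 herr2) _
    _ = c₁ * S + (ε' : ℝ≥0∞) := by
        rw [← ENNReal.ofReal_add (by positivity) (by positivity),
          show (ε' : ℝ) / 2 + (ε' : ℝ) / 2 = ((ε' : ℝ≥0) : ℝ) by ring,
          ENNReal.ofReal_coe_nnreal]
    _ = ENNReal.ofReal (2 * vball (N - 1) / vball N) *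
          (∫⁻ x in A, ENNReal.ofReal (g x) ∂(hMeas N)) + ε' := by
        rw [hRHS, hc1eq, mul_assoc]
end

section
/- Let X be a compact metric space, E ⊆ X nonempty closed, and g̃ : X → [ε, ∞) continuous for some ε > 0. For i ∈ ℕ, define F_i(x) := inf Σ_{k=0}^{n−1} g̃(p_k) d(p_k, p_{k+1}) over all finite chains p₀, …, p_n with p₀ ∈ E, p_n = x, and d(p_k, p_{k+1}) ≤ 1/i for all k, and set ũ_i(x) := min(F_i(x), 1). Then ũ_i is Lipschitz with constant at most max(i, sup_X g̃), and for all x, y ∈ X with d(x,y) ≤ 1/i one has |ũ_i(x) − ũ_i(y)| ≤ max(g̃(x), g̃(y)) · d(x,y). -/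
open Set ENNReal

theorem stmt10 {X : Type*} [MetricSpace X] [CompactSpace X]
    (E : Set X) (hE : IsClosed E) (hEne : E.Nonempty)
    (ε : ℝ) (hε : 0 < ε) (g : X → ℝ) (hg : Continuous g) (hge : ∀ x, ε ≤ g x)
    (i : ℕ) (hi : 0 < i)
    (F : X → ℝ≥0∞)
    -- `F x` is the infimum of `Σ g(p_k) d(p_k, p_{k+1})` over chains `p₀ ∈ E, …, p_n = x`
    -- with `d(p_k, p_{k+1}) ≤ 1/i`; it is `∞` when no such chain exists.
    (hF : ∀ x, F x = ⨅ (n : ℕ) (q : ℕ → X) (_ : q 0 ∈ E) (_ : q n = x)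
        (_ : ∀ k < n, dist (q k) (q (k + 1)) ≤ 1 / (i : ℝ)),
        ENNReal.ofReal (∑ k ∈ Finset.range n, g (q k) * dist (q k) (q (k + 1))))
    (u : X → ℝ) (hu : ∀ x, u x = (min (F x) 1).toReal) :
    LipschitzWith (Real.toNNReal (max (i : ℝ) (⨆ x, g x))) u ∧
    ∀ x y : X, dist x y ≤ 1 / (i : ℝ) → |u x - u y| ≤ max (g x) (g y) * dist x y := by
  have hXne : Nonempty X := ⟨hEne.choose⟩
  -- key estimate on F
  have key : ∀ x y : X, dist x y ≤ 1 / (i : ℝ) →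
      F y ≤ F x + ENNReal.ofReal (g x * dist x y) := by
    intro x y hxy
    rw [hF x, hF y]
    simp only [ENNReal.iInf_add]
    refine le_iInf fun n => le_iInf fun q => le_iInf fun hq0 => le_iInf fun hqn =>
      le_iInf fun hch => ?_
    set q' : ℕ → X := fun k => if k ≤ n then q k else y with hq'
    have hq'0 : q' 0 ∈ E := by simp [hq', Nat.zero_le n, hq0]
    have hq'n : q' (n + 1) = y := by simp [hq']
    have hq'x : q' n = x := by simp [hq', hqn]
    have hch' : ∀ k < n + 1, dist (q' k) (q' (k + 1)) ≤ 1 / (i : ℝ) := by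
      intro k hk
      rcases Nat.lt_or_ge k n with h | h
      · have h1 : k ≤ n := h.le
        have h2 : k + 1 ≤ n := h
        simp only [hq', if_pos h1, if_pos h2]
        exact hch k h
      · have hkn : k = n := le_antisymm (Nat.lt_succ_iff.mp hk) h
        subst hkn
        rw [hq'x, hq'n]
        exact hxy
    refine le_trans (iInf_le_of_le (n + 1) (iInf_le_of_le q' (iInf_le_of_le hq'0
      (iInf_le_of_le hq'n (iInf_le _ hch'))))) ?_
    have hsum : ∑ k ∈ Finset.range (n + 1), g (q' k) * dist (q' k) (q' (k + 1)) =
        (∑ k ∈ Finset.range n, g (q k) * dist (q k) (q (k + 1))) + g x * dist x y := by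
      rw [Finset.sum_range_succ, hq'x, hq'n]
      congr 1
      refine Finset.sum_congr rfl fun k hk => ?_
      have hk' := Finset.mem_range.mp hk
      simp only [hq', if_pos hk'.le, if_pos (Nat.succ_le_of_lt hk')]
    rw [hsum, ENNReal.ofReal_add (Finset.sum_nonneg fun k _ =>
      mul_nonneg (hε.le.trans (hge _)) dist_nonneg)
      (mul_nonneg (hε.le.trans (hge _)) dist_nonneg)]
  -- translate to u
  have hu_le : ∀ x y : X, dist x y ≤ 1 / (i : ℝ) → u y ≤ u x + g x * dist x y := by
    intro x y hxy
    rw [hu x, hu y]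
    set c : ℝ≥0∞ := ENNReal.ofReal (g x * dist x y) with hc
    have h1 : min (F y) 1 ≤ min (F x) 1 + c := by
      calc min (F y) 1 ≤ min (F x + c) 1 := min_le_min (key x y hxy) le_rfl
        _ ≤ min (F x + c) (1 + c) := min_le_min le_rfl le_self_add
        _ = min (F x) 1 + c := min_add_add_right _ _ _
    have hfin : min (F x) 1 + c ≠ ⊤ := by
      refine ENNReal.add_ne_top.mpr ⟨?_, ENNReal.ofReal_ne_top⟩
      exact ne_top_of_le_ne_top ENNReal.one_ne_top (min_le_right _ _)
    have := ENNReal.toReal_mono hfin h1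
    rw [ENNReal.toReal_add (ne_top_of_le_ne_top hfin le_self_add) ENNReal.ofReal_ne_top,
      ENNReal.toReal_ofReal (mul_nonneg (hε.le.trans (hge _)) dist_nonneg)] at this
    exact this
  have habs : ∀ x y : X, dist x y ≤ 1 / (i : ℝ) →
      |u x - u y| ≤ max (g x) (g y) * dist x y := by
    intro x y hxy
    rw [abs_sub_le_iff]
    constructor
    · have := hu_le y x (by rwa [dist_comm])
      rw [dist_comm y x] at this
      have h2 : g y * dist x y ≤ max (g x) (g y) * dist x y :=
        mul_le_mul_of_nonneg_right (le_max_right _ _) dist_nonneg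
      linarith
    · have := hu_le x y hxy
      have h2 : g x * dist x y ≤ max (g x) (g y) * dist x y :=
        mul_le_mul_of_nonneg_right (le_max_left _ _) dist_nonneg
      linarith
  refine ⟨?_, habs⟩
  -- Lipschitz part
  have hbdd : BddAbove (Set.range g) := by
    have := (isCompact_univ (X := X)).bddAbove_image hg.continuousOn
    rwa [Set.image_univ] at this
  have hsup : ∀ x, g x ≤ ⨆ x, g x := fun x => le_ciSup hbdd x
  have hKnn : (0 : ℝ) ≤ max (i : ℝ) (⨆ x, g x) :=
    le_trans (by exact_mod_cast hi.le) (le_max_left _ _)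
  have hu01 : ∀ x, 0 ≤ u x ∧ u x ≤ 1 := by
    intro x
    rw [hu x]
    refine ⟨ENNReal.toReal_nonneg, ?_⟩
    have : (min (F x) 1).toReal ≤ (1 : ℝ≥0∞).toReal :=
      ENNReal.toReal_mono ENNReal.one_ne_top (min_le_right _ _)
    simpa using this
  refine LipschitzWith.of_dist_le_mul fun x y => ?_
  rw [Real.dist_eq, Real.coe_toNNReal _ hKnn]
  rcases le_or_gt (dist x y) (1 / (i : ℝ)) with h | h
  · refine (habs x y h).trans (mul_le_mul_of_nonneg_right ?_ dist_nonneg)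
    exact max_le ((hsup x).trans (le_max_right _ _)) ((hsup y).trans (le_max_right _ _))
  · have hi' : (0 : ℝ) < i := by exact_mod_cast hi
    have h1 : |u x - u y| ≤ 1 := by
      have hx := hu01 x; have hy := hu01 y
      rw [abs_sub_le_iff]; constructor <;> linarith [hx.1, hx.2, hy.1, hy.2]
    have h2 : (1 : ℝ) ≤ (i : ℝ) * dist x y := by
      rw [div_lt_iff₀ hi'] at h
      linarith [mul_comm (dist x y) (i : ℝ)]
    refine h1.trans (h2.trans ?_)
    exact mul_le_mul_of_nonneg_right (le_max_left _ _) dist_nonneg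
end
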